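/- arXiv:1312.1200 — 2 statements merged into one kernel-verified Lean document; each statement's English description precedes it below -/
import Mathlib

section
/- Let θ be a fixed nonincreasing probability mass function on ℕ and let f̂^{(n)} = T(f^{(n)}) be the naive estimator based on the first n observations of an i.i.d. sequence from θ. Then for every δ > 0, n^{1/2−δ} · ‖f̂^{(n)} − θ‖_∞ → 0 almost surely as n → ∞, where ‖g‖_∞ = sup_{x≥1} |g_x|. -/
open MeasureTheory ProbabilityTheory Filter Topology Real Set

noncomputable section

namespace Species

/-- `θ` is a nonincreasing probability mass function on `ℕ` (0-based: the index
`x : ℕ` corresponds to the paper's species rank `x + 1`). -/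
def IsOrderedPMF (θ : ℕ → ℝ) : Prop :=
  (∀ x, 0 ≤ θ x) ∧ Antitone θ ∧ Summable θ ∧ ∑' x, θ x = 1

/-- A possibly defective nonincreasing probability mass function: nonnegative,
nonincreasing, with total mass at most one (the deficit `1 - ∑' φ` is the blob). -/
def IsDefectivePMF (φ : ℕ → ℝ) : Prop :=
  (∀ x, 0 ≤ φ x) ∧ Antitone φ ∧ Summable φ ∧ ∑' x, φ x ≤ 1

/-- The `L¹` distance `‖φ - θ‖₁ = ∑ᵢ |φᵢ - θᵢ|`. -/
def dist1 (φ θ : ℕ → ℝ) : ℝ := ∑' i, |φ i - θ i|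

/-- `N` is a partition of `n`: a nonincreasing sequence of counts summing to `n`
(in particular `N i = 0` for `i ≥ n`). -/
def IsPartitionOf (n : ℕ) (N : ℕ → ℕ) : Prop :=
  Antitone N ∧ (∑ i ∈ Finset.range n, N i) = n ∧ ∀ i, n ≤ i → N i = 0

/-- A valid assignment `χ` in the extended model: every population rank
(`some α`) has at most one preimage among the observed species, the blob
(`none`) is only allowed for species observed at most once, and unobserved
species are sent to the blob (their factor `φ_α ^ 0 = 1` is immaterial). -/
def ValidChi (N : ℕ → ℕ) (χ : ℕ → Option ℕ) : Prop :=
  (∀ i j α, χ i = some α → χ j = some α → i = j) ∧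
  (∀ i, χ i = none → N i ≤ 1) ∧
  (∀ i, N i = 0 → χ i = none)

/-- The blob count `N₀ = n - ∑_{α ≥ 1} N_{χ⁻¹(α)}` of an assignment `χ`. -/
def blobCount (n : ℕ) (N : ℕ → ℕ) (χ : ℕ → Option ℕ) : ℕ :=
  ∑ i ∈ Finset.range n, (if χ i = none then N i else 0)

/-- The extended-model likelihood
`lik(φ) = ∑_χ φ₀^{N₀} ∏_{α} φ_α^{N_{χ⁻¹(α)}}` of the parameter `φ`
given the observed partition `N` of `n`, where `φ₀ = 1 - ∑' φ`. -/
def lik (φ : ℕ → ℝ) (n : ℕ) (N : ℕ → ℕ) : ℝ :=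
  ∑' χ : {c : ℕ → Option ℕ // ValidChi N c},
    (1 - ∑' α, φ α) ^ blobCount n N χ.1 *
      ∏ i ∈ Finset.range n, Option.elim (χ.1 i) 1 (fun α => φ α ^ N i)

/-- The probability `P^{(n,φ)}({N})` of observing the partition `N`, i.e. the
likelihood together with the multinomial coefficient `n! / (N₀! ∏ᵢ Nᵢ!)`. -/
def partitionProb (φ : ℕ → ℝ) (n : ℕ) (N : ℕ → ℕ) : ℝ :=
  ∑' χ : {c : ℕ → Option ℕ // ValidChi N c},
    ((n.factorial : ℝ) /
        (((blobCount n N χ.1).factorial : ℝ) *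
          ∏ i ∈ Finset.range n, ((N i).factorial : ℝ))) *
      (1 - ∑' α, φ α) ^ blobCount n N χ.1 *
      ∏ i ∈ Finset.range n, Option.elim (χ.1 i) 1 (fun α => φ α ^ N i)

/-- `P^{(n,φ)}(A)` for a set `A` of partitions of `n`. -/
def PP (φ : ℕ → ℝ) (n : ℕ) (A : Set (ℕ → ℕ)) : ℝ :=
  ∑' N : {N : ℕ → ℕ // IsPartitionOf n N ∧ N ∈ A}, partitionProb φ n N.1

/-- An extended maximum likelihood estimator for the observed partition `N`. -/
def IsExtendedMLE (n : ℕ) (N : ℕ → ℕ) (θhat : ℕ → ℝ) : Prop :=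
  IsDefectivePMF θhat ∧ ∀ φ, IsDefectivePMF φ → lik φ n N ≤ lik θhat n N

/-- A sieved parameter at truncation level `k`: a nonincreasing nonnegative
vector supported on `{0, …, k-1}` with total mass at most one. -/
def IsSievedParam (k : ℕ) (φ : ℕ → ℝ) : Prop :=
  (∀ i, 0 ≤ φ i) ∧ (∀ i j, i ≤ j → j < k → φ j ≤ φ i) ∧
  (∀ i, k ≤ i → φ i = 0) ∧ (∑ i ∈ Finset.range k, φ i) ≤ 1

/-- Valid assignments in the sieved model at truncation level `k`. -/
def SievedValidChi (k : ℕ) (N : ℕ → ℕ) (χ : ℕ → Option ℕ) : Prop :=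
  (∀ i j α, χ i = some α → χ j = some α → i = j) ∧
  (∀ i α, χ i = some α → α < k) ∧
  (∀ i, χ i = none → N i ≤ 1) ∧
  (∀ i, N i = 0 → χ i = none)

/-- The sieved likelihood at truncation level `k`. -/
def sievedLik (k : ℕ) (φ : ℕ → ℝ) (n : ℕ) (N : ℕ → ℕ) : ℝ :=
  ∑' χ : {c : ℕ → Option ℕ // SievedValidChi k N c},
    (1 - ∑ α ∈ Finset.range k, φ α) ^ blobCount n N χ.1 *
      ∏ i ∈ Finset.range n, Option.elim (χ.1 i) 1 (fun α => φ α ^ N i)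

/-- A sieved maximum likelihood estimator at truncation level `k`. -/
def IsSievedMLE (k n : ℕ) (N : ℕ → ℕ) (θhat : ℕ → ℝ) : Prop :=
  IsSievedParam k θhat ∧
    ∀ φ, IsSievedParam k φ → sievedLik k φ n N ≤ sievedLik k θhat n N

/-- The species counts of the first `n` observations of the sequence `X`. -/
def counts {Ω : Type*} (X : ℕ → Ω → ℕ) (n : ℕ) (ω : Ω) (x : ℕ) : ℕ :=
  ((Finset.range n).filter fun i => X i ω = x).card

/-- The empirical probability mass function of the first `n` observations. -/
def empirical {Ω : Type*} (X : ℕ → Ω → ℕ) (n : ℕ) (ω : Ω) (x : ℕ) : ℝ :=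
  (counts X n ω x : ℝ) / n

/-- The nonincreasing rearrangement of a (finitely supported) sequence of
natural numbers: entry `j` is the `(j+1)`-st largest value. -/
def rearrangeNat (f : ℕ → ℕ) (j : ℕ) : ℕ :=
  sInf {t : ℕ | {m | t < f m}.Finite ∧ Nat.card {m | t < f m} ≤ j}

/-- The observed random partition of `n`: the sorted species counts of the
first `n` observations. -/
def samplePartition {Ω : Type*} (X : ℕ → Ω → ℕ) (n : ℕ) (ω : Ω) : ℕ → ℕ :=
  rearrangeNat (counts X n ω)

/-- The monotone (nonincreasing) rearrangement map `T` on nonnegative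
summable real sequences. -/
def rearrange (f : ℕ → ℝ) (j : ℕ) : ℝ :=
  sInf {t : ℝ | 0 ≤ t ∧ {m | t < f m}.Finite ∧ Nat.card {m | t < f m} ≤ j}

/-- The naive estimator `f̂⁽ⁿ⁾ = T(f⁽ⁿ⁾) = N/n`. -/
def naive {Ω : Type*} (X : ℕ → Ω → ℕ) (n : ℕ) (ω : Ω) : ℕ → ℝ :=
  rearrange (empirical X n ω)

/-- `X` is an i.i.d. sample from the probability mass function `θ` on `ℕ`
under the probability measure `P`. -/
def IsIIDSample {Ω : Type*} [MeasurableSpace Ω] (P : Measure Ω)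
    (θ : ℕ → ℝ) (X : ℕ → Ω → ℕ) : Prop :=
  (∀ i, Measurable (X i)) ∧
  (∀ i x, P {ω | X i ω = x} = ENNReal.ofReal (θ x)) ∧
  iIndepFun X P

/-- `I`, the number of species observed at least twice in the partition `N`. -/
def numRepeated (N : ℕ → ℕ) : ℕ := Nat.card {i | 2 ≤ N i}

/-- The estimator `f̌⁽ⁿ⁾` on the species observed at least twice (0-based:
entry `j` is the paper's `f̌⁽ⁿ⁾(j+1)`): `N_j / n` for `j < I` and `0` beyond. -/
def fcheck (n : ℕ) (N : ℕ → ℕ) (j : ℕ) : ℝ :=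
  if j < numRepeated N then (N j : ℝ) / n else 0

end Species

open Species

/-!
The empirical distribution function `F` of the first `n` observations and the distribution
function `G` of `θ` are monotone with values in `[0, 1]`, so controlling `|F - G|` on the
`O(1/t)` indices at which `G` crosses the levels `r t` controls it everywhere up to `2t`; since
`θ` and `f⁽ⁿ⁾` are increments of `G` and `F`, this gives `‖f⁽ⁿ⁾ - θ‖_∞ ≤ 4t`. By Hoeffding's
inequality each grid index fails with probability at most `2 exp(-2nt²)`, and for
`t = ε n^{δ-1/2}` these failure probabilities are summable, so by Borel–Cantelli
`‖f⁽ⁿ⁾ - θ‖_∞ ≤ 4ε n^{δ-1/2}` eventually, almost surely. Finally `T` does not increase sup-norm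
distances and fixes the nonincreasing `θ`.
-/

namespace Species

section Rearrangement

variable {f g θ : ℕ → ℝ}

lemma tsum_mem_rearrange_set (hf0 : ∀ x, 0 ≤ f x) (hf : Summable f) (j : ℕ) :
    ∑' x, f x ∈ {t : ℝ | 0 ≤ t ∧ {m | t < f m}.Finite ∧ Nat.card {m | t < f m} ≤ j} := by
  have hempty : {m | ∑' x, f x < f m} = ∅ :=
    Set.eq_empty_of_forall_notMem fun m hm => (hf.le_tsum m fun k _ => hf0 k).not_gt hm
  simp [hempty, tsum_nonneg hf0]

lemma rearrange_le_add (hg0 : ∀ x, 0 ≤ g x) (hg : Summable g) {d : ℝ} (hd : 0 ≤ d)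
    (h : ∀ x, f x ≤ g x + d) (j : ℕ) : rearrange f j ≤ rearrange g j + d := by
  rw [← sub_le_iff_le_add]
  refine le_csInf ⟨_, tsum_mem_rearrange_set hg0 hg j⟩ fun t ⟨ht0, hfin, hcard⟩ => ?_
  have hsub : {m | t + d < f m} ⊆ {m | t < g m} := fun m (hm : t + d < f m) =>
    show t < g m by linarith [h m]
  rw [sub_le_iff_le_add]
  exact csInf_le ⟨0, fun _ hs => hs.1⟩
    ⟨by positivity, hfin.subset hsub, (Nat.card_mono hfin hsub).trans hcard⟩

lemma rearrange_eq_self_of_antitone (hθ0 : ∀ x, 0 ≤ θ x) (hθ : Antitone θ) (hsum : Summable θ)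
    (j : ℕ) : rearrange θ j = θ j := by
  have card_Iio (k : ℕ) : Nat.card (Set.Iio k) = k := by simp
  apply le_antisymm
  · have hsub : {m | θ j < θ m} ⊆ Set.Iio j := fun m hm =>
      lt_of_not_ge fun hjm => (hθ hjm).not_gt hm
    exact csInf_le ⟨0, fun _ hs => hs.1⟩ ⟨hθ0 j, (Set.finite_Iio j).subset hsub,
      (Nat.card_mono (Set.finite_Iio j) hsub).trans (card_Iio j).le⟩
  · refine le_csInf ⟨_, tsum_mem_rearrange_set hθ0 hsum j⟩ fun t ⟨_, hfin, hcard⟩ => ?_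
    by_contra! hlt
    have hsub : Set.Iio (j + 1) ⊆ {m | t < θ m} := fun m hm =>
      hlt.trans_le (hθ (Nat.lt_succ_iff.mp hm))
    have := (card_Iio (j + 1)).symm.le.trans (Nat.card_mono hfin hsub)
    omega

lemma abs_rearrange_sub_le (hθ0 : ∀ x, 0 ≤ θ x) (hθ : Antitone θ) (hθs : Summable θ)
    (hf0 : ∀ x, 0 ≤ f x) (hf : Summable f) {d : ℝ} (hd : 0 ≤ d) (h : ∀ x, |f x - θ x| ≤ d)
    (j : ℕ) : |rearrange f j - θ j| ≤ d := by
  have h₁ := rearrange_le_add (f := f) hθ0 hθs hd (fun x => by linarith [(abs_le.1 (h x)).2]) j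
  have h₂ := rearrange_le_add (f := θ) hf0 hf hd (fun x => by linarith [(abs_le.1 (h x)).1]) j
  rw [rearrange_eq_self_of_antitone hθ0 hθ hθs] at h₁ h₂
  exact abs_le.2 ⟨by linarith, by linarith⟩

end Rearrangement

section CDF

def cumSum (f : ℕ → ℝ) (s : ℕ) : ℝ := ∑ x ∈ Finset.range (s + 1), f x

variable {f g : ℕ → ℝ}

lemma cumSum_nonneg (hf : ∀ x, 0 ≤ f x) (s : ℕ) : 0 ≤ cumSum f s :=
  Finset.sum_nonneg fun x _ => hf x

lemma cumSum_mono (hf : ∀ x, 0 ≤ f x) : Monotone (cumSum f) := fun _ _ hab =>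
  Finset.sum_le_sum_of_subset_of_nonneg (Finset.range_subset_range.2 (by omega))
    fun x _ _ => hf x

lemma tendsto_cumSum {a : ℝ} (h : HasSum f a) : Tendsto (cumSum f) atTop (𝓝 a) :=
  h.tendsto_sum_nat.comp (tendsto_add_atTop_nat 1)

lemma abs_sub_le_of_abs_cumSum_sub_le {d : ℝ} (h : ∀ s, |cumSum f s - cumSum g s| ≤ d)
    (x : ℕ) : |f x - g x| ≤ 2 * d := by
  cases x with
  | zero =>
    have hd : 0 ≤ d := (abs_nonneg _).trans (h 0)
    simpa [cumSum] using (h 0).trans (by linarith)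
  | succ x =>
    have hx : f (x + 1) - g (x + 1) =
        (cumSum f (x + 1) - cumSum g (x + 1)) - (cumSum f x - cumSum g x) := by
      simp only [cumSum, Finset.sum_range_succ _ (x + 1)]
      ring
    rw [hx, two_mul]
    exact (abs_sub _ _).trans (add_le_add (h _) (h _))

end CDF

section Grid

def levelIndex (G : ℕ → ℝ) (t : ℝ) (r : ℕ) : ℕ := sInf {j | r * t ≤ G j}

/-- An index `k` with `r * t ≤ G k < (r + 1) * t` lies between `levelIndex G t r` and
`levelIndex G t (r + 1) - 1`, so it is squeezed between two grid points. -/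
def cdfGrid (G : ℕ → ℝ) (t : ℝ) : Finset ℕ :=
  (Finset.range (⌈1 / t⌉₊ + 2)).image (levelIndex G t) ∪
    (Finset.range (⌈1 / t⌉₊ + 2)).image (fun r => levelIndex G t r - 1)

variable {F G : ℕ → ℝ} {t : ℝ}

lemma card_cdfGrid_le : (cdfGrid G t).card ≤ 2 * (⌈1 / t⌉₊ + 2) := by
  refine (Finset.card_union_le _ _).trans ?_
  have h₁ := Finset.card_image_le (s := Finset.range (⌈1 / t⌉₊ + 2)) (f := levelIndex G t)
  have h₂ := Finset.card_image_le (s := Finset.range (⌈1 / t⌉₊ + 2))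
    (f := fun r => levelIndex G t r - 1)
  rw [Finset.card_range] at h₁ h₂
  omega

lemma levelIndex_mem_cdfGrid {r : ℕ} (hr : r < ⌈1 / t⌉₊ + 2) :
    levelIndex G t r ∈ cdfGrid G t :=
  Finset.mem_union_left _ (Finset.mem_image_of_mem _ (Finset.mem_range.2 hr))

lemma levelIndex_sub_one_mem_cdfGrid {r : ℕ} (hr : r < ⌈1 / t⌉₊ + 2) :
    levelIndex G t r - 1 ∈ cdfGrid G t :=
  Finset.mem_union_right _ (Finset.mem_image_of_mem (fun r => levelIndex G t r - 1)
    (Finset.mem_range.2 hr))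

lemma le_apply_levelIndex {r : ℕ} (h : ∃ j, r * t ≤ G j) : r * t ≤ G (levelIndex G t r) :=
  Nat.sInf_mem h

lemma levelIndex_le {r k : ℕ} (h : r * t ≤ G k) : levelIndex G t r ≤ k :=
  Nat.sInf_le h

lemma apply_lt_of_lt_levelIndex {r k : ℕ} (h : k < levelIndex G t r) : G k < r * t :=
  not_le.1 (Nat.notMem_of_lt_sInf h)

lemma sub_two_mul_le_of_forall_mem_cdfGrid
    (hgrid : ∀ s ∈ cdfGrid G t, |F s - G s| ≤ t) (hF : Monotone F) {k r : ℕ}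
    (hr : r * t ≤ G k) (hr' : G k < (r + 1) * t) (hrt : r ≤ ⌈1 / t⌉₊) :
    G k - 2 * t ≤ F k := by
  have hj := le_apply_levelIndex ⟨k, hr⟩
  have hjk := levelIndex_le hr
  have hgj := (abs_le.1 (hgrid _ (levelIndex_mem_cdfGrid (r := r) (by omega)))).1
  linarith [hF hjk]

lemma le_add_two_mul_of_forall_mem_cdfGrid
    (hgrid : ∀ s ∈ cdfGrid G t, |F s - G s| ≤ t) (ht : 0 < t) (hG : Monotone G)
    (hG1 : Tendsto G atTop (𝓝 1)) (hF : Monotone F) (hF1 : ∀ k, F k ≤ 1) {k r : ℕ}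
    (hr : r * t ≤ G k) (hr' : G k < (r + 1) * t) (hrt : r ≤ ⌈1 / t⌉₊) :
    F k ≤ G k + 2 * t := by
  by_cases hS : ∃ j, ((r + 1 : ℕ) : ℝ) * t ≤ G j
  · set j := levelIndex G t (r + 1)
    have hj : ((r + 1 : ℕ) : ℝ) * t ≤ G j := le_apply_levelIndex hS
    push_cast at hj
    have hkj : k < j := lt_of_not_ge fun hjk => (hr'.trans_le hj).not_ge (hG hjk)
    have hj' : G (j - 1) < ((r + 1 : ℕ) : ℝ) * t := apply_lt_of_lt_levelIndex (by omega)
    push_cast at hj'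
    have hgj := (abs_le.1 (hgrid _ (levelIndex_sub_one_mem_cdfGrid (r := r + 1)
      (by omega)))).2
    linarith [hF (show k ≤ j - 1 by omega)]
  · simp only [not_exists, not_le] at hS
    have h1 : 1 ≤ ((r + 1 : ℕ) : ℝ) * t := le_of_tendsto' hG1 fun j => (hS j).le
    push_cast at h1
    linarith [hF1 k]

lemma abs_sub_le_of_forall_mem_cdfGrid
    (hgrid : ∀ s ∈ cdfGrid G t, |F s - G s| ≤ t) (ht : 0 < t) (hG : Monotone G)
    (hG0 : ∀ k, 0 ≤ G k) (hG1 : Tendsto G atTop (𝓝 1)) (hF : Monotone F) (hF1 : ∀ k, F k ≤ 1)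
    (k : ℕ) :
    |F k - G k| ≤ 2 * t := by
  set r := ⌊G k / t⌋₊
  have hr : r * t ≤ G k := (le_div_iff₀ ht).1 (Nat.floor_le (div_nonneg (hG0 k) ht.le))
  have hr' : G k < (r + 1) * t := (div_lt_iff₀ ht).1 (Nat.lt_floor_add_one _)
  have hrt : r ≤ ⌈1 / t⌉₊ := (Nat.floor_le_ceil _).trans' (Nat.floor_mono
    (div_le_div_of_nonneg_right (hG.ge_of_tendsto hG1 k) ht.le))
  rw [abs_le]
  constructor
  · linarith [sub_two_mul_le_of_forall_mem_cdfGrid hgrid hF hr hr' hrt]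
  · linarith [le_add_two_mul_of_forall_mem_cdfGrid hgrid ht hG hG1 hF hF1 hr hr' hrt]

end Grid

section Empirical

variable {Ω : Type*} {X : ℕ → Ω → ℕ}

lemma empirical_nonneg (n : ℕ) (ω : Ω) (x : ℕ) : 0 ≤ empirical X n ω x := by
  unfold empirical; positivity

lemma summable_empirical (n : ℕ) (ω : Ω) : Summable (empirical X n ω) := by
  refine summable_of_ne_finset_zero (s := (Finset.range n).image fun i => X i ω) fun x hx => ?_
  have hc : counts X n ω x = 0 := Finset.card_eq_zero.2 <| Finset.filter_eq_empty_iff.2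
    fun i hi hxi => hx (Finset.mem_image.2 ⟨i, hi, hxi⟩)
  simp [empirical, hc]

lemma cumSum_empirical (n : ℕ) (ω : Ω) (s : ℕ) :
    cumSum (empirical X n ω) s =
      (∑ i ∈ Finset.range n, if X i ω ≤ s then (1 : ℝ) else 0) / n := by
  simp only [cumSum, empirical, ← Finset.sum_div, counts, Finset.card_filter]
  push_cast
  rw [Finset.sum_comm]
  congr 1
  refine Finset.sum_congr rfl fun i _ => ?_
  rw [Finset.sum_ite_eq]
  simp

lemma cumSum_empirical_le_one (n : ℕ) (ω : Ω) (s : ℕ) : cumSum (empirical X n ω) s ≤ 1 := by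
  rw [cumSum_empirical]
  refine div_le_one_of_le₀ ?_ n.cast_nonneg
  calc ∑ i ∈ Finset.range n, (if X i ω ≤ s then (1 : ℝ) else 0)
      ≤ ∑ _i ∈ Finset.range n, (1 : ℝ) := Finset.sum_le_sum fun i _ => by split_ifs <;> norm_num
    _ = n := by simp

end Empirical

section Concentration

variable {Ω : Type*} [MeasurableSpace Ω]

lemma measureReal_le_abs_sum_range_le {μ : Measure Ω} [IsFiniteMeasure μ] {Y : ℕ → Ω → ℝ}
    (hY : iIndepFun Y μ) {c : NNReal} (hc : ∀ i, HasSubgaussianMGF (Y i) c μ) (n : ℕ) {ε : ℝ}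
    (hε : 0 ≤ ε) :
    μ.real {ω | ε ≤ |∑ i ∈ Finset.range n, Y i ω|} ≤ 2 * exp (-ε ^ 2 / (2 * n * c)) := by
  have hY' : iIndepFun (fun i ω => -Y i ω) μ :=
    hY.comp (fun _ => Neg.neg) fun _ => measurable_neg
  have hsub : {ω | ε ≤ |∑ i ∈ Finset.range n, Y i ω|} ⊆
      {ω | ε ≤ ∑ i ∈ Finset.range n, Y i ω} ∪ {ω | ε ≤ ∑ i ∈ Finset.range n, -Y i ω} := by
    intro ω hω
    rw [Set.mem_union, Set.mem_ofPred_eq, Set.mem_ofPred_eq, Finset.sum_neg_distrib]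
    exact le_abs.1 hω
  calc _ ≤ _ := measureReal_mono hsub
    _ ≤ _ := measureReal_union_le _ _
    _ ≤ exp (-ε ^ 2 / (2 * n * c)) + exp (-ε ^ 2 / (2 * n * c)) := add_le_add
        (HasSubgaussianMGF.measure_sum_range_ge_le_of_iIndepFun hY (fun i _ => hc i) hε)
        (HasSubgaussianMGF.measure_sum_range_ge_le_of_iIndepFun hY' (fun i _ => (hc i).neg) hε)
    _ = _ := (two_mul _).symm

variable {P : Measure Ω} [IsProbabilityMeasure P] {θ : ℕ → ℝ} {X : ℕ → Ω → ℕ}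

lemma IsIIDSample.measureReal_le_eq_cumSum (hθ0 : ∀ x, 0 ≤ θ x) (hX : IsIIDSample P θ X)
    (i s : ℕ) : P.real {ω | X i ω ≤ s} = cumSum θ s := by
  have hset : {ω | X i ω ≤ s} = ⋃ x ∈ Finset.range (s + 1), {ω | X i ω = x} := by
    ext ω; simp
  have hms (x : ℕ) : MeasurableSet {ω | X i ω = x} := hX.1 i (measurableSet_singleton x)
  rw [hset, measureReal_biUnion_finset
    (fun a _ b _ hab => Set.disjoint_left.2 fun ω h₁ h₂ => hab (h₁.symm.trans h₂))
    (fun x _ => hms x)]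
  exact Finset.sum_congr rfl fun x _ => by simp [measureReal_def, hX.2.1, hθ0 x]

lemma IsIIDSample.measureReal_le_abs_cumSum_empirical_sub_le (hθ0 : ∀ x, 0 ≤ θ x)
    (hX : IsIIDSample P θ X) {n : ℕ} (hn : 0 < n) (s : ℕ) {u : ℝ} (hu : 0 ≤ u) :
    P.real {ω | u ≤ |cumSum (empirical X n ω) s - cumSum θ s|} ≤ 2 * exp (-2 * n * u ^ 2) := by
  set Z : ℕ → Ω → ℝ := fun i ω => if X i ω ≤ s then 1 else 0
  have hZmeas (i : ℕ) : Measurable (Z i) :=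
    (measurable_from_top (f := fun v : ℕ => if v ≤ s then (1 : ℝ) else 0)).comp (hX.1 i)
  have hZmean (i : ℕ) : P[Z i] = cumSum θ s := by
    have hZ : Z i = {ω | X i ω ≤ s}.indicator 1 := by ext ω; simp [Z, Set.indicator_apply]
    have hms : MeasurableSet {ω | X i ω ≤ s} := hX.1 i measurableSet_Iic
    rw [hZ, integral_indicator_one hms, hX.measureReal_le_eq_cumSum hθ0]
  have hY : iIndepFun (fun i ω => Z i ω - cumSum θ s) P :=
    hX.2.2.comp (fun _ v => (if v ≤ s then (1 : ℝ) else 0) - cumSum θ s)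
      fun _ => measurable_from_top
  have hsubG (i : ℕ) := hasSubgaussianMGF_of_mem_Icc (μ := P) (a := 0) (b := 1)
    (hZmeas i).aemeasurable (ae_of_all _ fun ω => by by_cases h : X i ω ≤ s <;> simp [Z, h])
  simp only [hZmean] at hsubG
  have hn' : (0 : ℝ) < n := Nat.cast_pos.2 hn
  have hset : {ω | u ≤ |cumSum (empirical X n ω) s - cumSum θ s|} =
      {ω | n * u ≤ |∑ i ∈ Finset.range n, (Z i ω - cumSum θ s)|} := by
    ext ω
    rw [Set.mem_ofPred_eq, Set.mem_ofPred_eq, Finset.sum_sub_distrib, Finset.sum_const,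
      Finset.card_range, nsmul_eq_mul, cumSum_empirical, div_sub' hn'.ne', abs_div,
      abs_of_pos hn', le_div_iff₀ hn', mul_comm]
  rw [hset]
  refine (measureReal_le_abs_sum_range_le hY hsubG n (by positivity)).trans_eq ?_
  norm_num
  field_simp
  ring

end Concentration

lemma summable_mul_exp_neg_mul_rpow {c q : ℝ} (hc : 0 < c) (hq : 0 < q) :
    Summable fun n : ℕ => (n : ℝ) * exp (-(c * (n : ℝ) ^ q)) := by
  have hexp :
      (fun n : ℕ => exp (-(c * (n : ℝ) ^ q))) =O[atTop] fun n : ℕ => (n : ℝ) ^ (-3 : ℝ) := by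
    refine ((isLittleO_exp_neg_mul_rpow_atTop hc (-3 / q)).isBigO.comp_tendsto
      ((tendsto_rpow_atTop hq).comp tendsto_natCast_atTop_atTop)).congr' ?_ ?_
    · filter_upwards with n
      simp [neg_mul]
    · filter_upwards with n
      simp only [Function.comp_apply, ← rpow_mul n.cast_nonneg]
      congr 1
      field_simp
  refine summable_of_isBigO_nat (summable_nat_rpow.2 (by norm_num : (-2 : ℝ) < -1))
    (((Asymptotics.isBigO_refl (fun n : ℕ => (n : ℝ)) atTop).mul hexp).congr' (by simp) ?_)
  filter_upwards [eventually_gt_atTop 0] with n hn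
  rw [show (-2 : ℝ) = 1 + -3 by norm_num, rpow_add (Nat.cast_pos.2 hn), rpow_one]

lemma ae_eventually_notMem_of_summable {α : Type*} [MeasurableSpace α] {μ : Measure α}
    [IsFiniteMeasure μ] {s : ℕ → Set α} {b : ℕ → ℝ} (hb : Summable b)
    (h : ∀ᶠ n in atTop, μ.real (s n) ≤ b n) : ∀ᵐ x ∂μ, ∀ᶠ n in atTop, x ∉ s n := by
  have hs : Summable fun n => μ.real (s n) := hb.of_norm_bounded_eventually_nat <| by
    filter_upwards [h] with n hn
    rwa [Real.norm_of_nonneg measureReal_nonneg]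
  refine ae_eventually_notMem ?_
  rw [tsum_congr fun n => (ofReal_measureReal (μ := μ) (s := s n)).symm,
    ← ENNReal.ofReal_tsum_of_nonneg (fun _ => measureReal_nonneg) hs]
  exact ENNReal.ofReal_ne_top

section Naive

variable {Ω : Type*} {θ : ℕ → ℝ} {X : ℕ → Ω → ℕ}

def gridDeviationEvent (X : ℕ → Ω → ℕ) (θ : ℕ → ℝ) (n : ℕ) (t : ℝ) : Set Ω :=
  ⋃ s ∈ cdfGrid (cumSum θ) t, {ω | t ≤ |cumSum (empirical X n ω) s - cumSum θ s|}

lemma abs_naive_sub_le_of_notMem_gridDeviationEvent (hθ : IsOrderedPMF θ) {n : ℕ} {ω : Ω}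
    {t : ℝ} (ht : 0 < t) (hω : ω ∉ gridDeviationEvent X θ n t) (j : ℕ) :
    |naive X n ω j - θ j| ≤ 4 * t := by
  obtain ⟨hθ0, hθ, hθs, hθ1⟩ := hθ
  have hgrid : ∀ s ∈ cdfGrid (cumSum θ) t, |cumSum (empirical X n ω) s - cumSum θ s| ≤ t :=
    fun s hs => (not_le.1 fun h => hω (Set.mem_biUnion hs h)).le
  have hcdf := abs_sub_le_of_forall_mem_cdfGrid hgrid ht (cumSum_mono hθ0) (cumSum_nonneg hθ0)
    (tendsto_cumSum (hθ1 ▸ hθs.hasSum)) (cumSum_mono (empirical_nonneg n ω))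
    (cumSum_empirical_le_one n ω)
  have hpmf := abs_sub_le_of_abs_cumSum_sub_le hcdf
  have := abs_rearrange_sub_le hθ0 hθ hθs (empirical_nonneg n ω) (summable_empirical n ω)
    (by positivity) hpmf j
  exact this.trans_eq (by ring)

variable [MeasurableSpace Ω] {P : Measure Ω} [IsProbabilityMeasure P]

lemma IsIIDSample.measureReal_gridDeviationEvent_le (hθ0 : ∀ x, 0 ≤ θ x)
    (hX : IsIIDSample P θ X) {n : ℕ} (hn : 0 < n) {t : ℝ} (ht : 0 ≤ t) :
    P.real (gridDeviationEvent X θ n t) ≤ 4 * (⌈1 / t⌉₊ + 2) * exp (-2 * n * t ^ 2) := by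
  calc _ ≤ ∑ s ∈ cdfGrid (cumSum θ) t, 2 * exp (-2 * n * t ^ 2) :=
        (measureReal_biUnion_finset_le _ _).trans (Finset.sum_le_sum fun s _ =>
          hX.measureReal_le_abs_cumSum_empirical_sub_le hθ0 hn s ht)
    _ ≤ (2 * (⌈1 / t⌉₊ + 2) : ℕ) * (2 * exp (-2 * n * t ^ 2)) := by
        rw [Finset.sum_const, nsmul_eq_mul]
        gcongr
        exact card_cdfGrid_le
    _ = _ := by push_cast; ring

lemma IsIIDSample.measureReal_gridDeviationEvent_rpow_le (hθ0 : ∀ x, 0 ≤ θ x)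
    (hX : IsIIDSample P θ X) {δ ε : ℝ} (hδ : 0 < δ) (hε : 0 < ε) {n : ℕ} (hn : 0 < n) :
    P.real (gridDeviationEvent X θ n (ε * (n : ℝ) ^ (δ - 1 / 2))) ≤
      4 * (ε⁻¹ + 3) * (n * exp (-(2 * ε ^ 2 * (n : ℝ) ^ (2 * δ)))) := by
  have hn' : (0 : ℝ) < n := Nat.cast_pos.2 hn
  set t := ε * (n : ℝ) ^ (δ - 1 / 2)
  have ht : 0 < t := by positivity
  have hexp : -2 * n * t ^ 2 = -(2 * ε ^ 2 * (n : ℝ) ^ (2 * δ)) := by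
    have : (n : ℝ) * ((n : ℝ) ^ (δ - 1 / 2)) ^ 2 = (n : ℝ) ^ (2 * δ) := by
      rw [← rpow_natCast, ← rpow_mul hn'.le,
        ← rpow_one_add' hn'.le (ne_of_gt (by push_cast; linarith))]
      ring_nf
    linear_combination (-2 * ε ^ 2) * this
  have hceil : (⌈1 / t⌉₊ : ℝ) + 2 ≤ (ε⁻¹ + 3) * n := by
    have hinv : 1 / t ≤ ε⁻¹ * n := by
      rw [one_div, mul_inv, ← rpow_neg hn'.le, neg_sub]
      gcongr
      exact (rpow_le_rpow_of_exponent_le (Nat.one_le_cast.2 hn) (by linarith)).trans_eq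
        (rpow_one _)
    have h1 : (1 : ℝ) ≤ n := Nat.one_le_cast.2 hn
    nlinarith [Nat.ceil_lt_add_one (one_div_pos.2 ht).le]
  calc _ ≤ 4 * (⌈1 / t⌉₊ + 2) * exp (-2 * n * t ^ 2) :=
        hX.measureReal_gridDeviationEvent_le hθ0 hn ht.le
    _ ≤ 4 * ((ε⁻¹ + 3) * n) * exp (-(2 * ε ^ 2 * (n : ℝ) ^ (2 * δ))) := by
        rw [hexp]
        gcongr
    _ = _ := by ring

lemma IsIIDSample.ae_eventually_rpow_mul_iSup_abs_naive_sub_le (hθ : IsOrderedPMF θ)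
    (hX : IsIIDSample P θ X) {δ : ℝ} (hδ : 0 < δ) {ε : ℝ} (hε : 0 < ε) :
    ∀ᵐ ω ∂P, ∀ᶠ n : ℕ in atTop,
      (n : ℝ) ^ ((1 : ℝ) / 2 - δ) * ⨆ x, |naive X n ω x - θ x| ≤ 4 * ε := by
  have hBC : ∀ᵐ ω ∂P, ∀ᶠ n : ℕ in atTop,
      ω ∉ gridDeviationEvent X θ n (ε * (n : ℝ) ^ (δ - 1 / 2)) :=
    ae_eventually_notMem_of_summable
      ((summable_mul_exp_neg_mul_rpow (by positivity) (by positivity)).mul_left _)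
      ((eventually_gt_atTop 0).mono fun n hn =>
        hX.measureReal_gridDeviationEvent_rpow_le hθ.1 hδ hε hn)
  filter_upwards [hBC] with ω hω
  filter_upwards [hω, eventually_gt_atTop 0] with n hn hn0
  have hn' : (0 : ℝ) < n := Nat.cast_pos.2 hn0
  calc _ ≤ (n : ℝ) ^ ((1 : ℝ) / 2 - δ) * (4 * (ε * (n : ℝ) ^ (δ - 1 / 2))) := by
        gcongr
        exact ciSup_le (abs_naive_sub_le_of_notMem_gridDeviationEvent hθ (by positivity) hn)
    _ = 4 * ε * ((n : ℝ) ^ ((1 : ℝ) / 2 - δ) * (n : ℝ) ^ (δ - 1 / 2)) := by ring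
    _ = 4 * ε := by
        rw [← rpow_add hn', show (1 : ℝ) / 2 - δ + (δ - 1 / 2) = 0 by ring, rpow_zero, mul_one]

end Naive

end Species

/-- almost sure supnorm rate of the naive estimator:
`n^{1/2-δ} ‖f̂⁽ⁿ⁾ - θ‖_∞ → 0` almost surely, for every `δ > 0`. -/
theorem statement11 {Ω : Type*} [MeasurableSpace Ω] (P : Measure Ω)
    [IsProbabilityMeasure P] (θ : ℕ → ℝ) (hθ : IsOrderedPMF θ)
    (X : ℕ → Ω → ℕ) (hX : IsIIDSample P θ X) :
    ∀ δ : ℝ, 0 < δ →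
      ∀ᵐ ω ∂P,
        Tendsto (fun n : ℕ =>
            (n : ℝ) ^ ((1 : ℝ) / 2 - δ) * ⨆ x : ℕ, |naive X n ω x - θ x|)
          atTop (𝓝 0) := by
  intro δ hδ
  have h (m : ℕ) := hX.ae_eventually_rpow_mul_iSup_abs_naive_sub_le hθ hδ
    (Nat.one_div_pos_of_nat (n := m))
  filter_upwards [ae_all_iff.2 h] with ω hω
  refine tendsto_order.2 ⟨fun a ha => Eventually.of_forall fun n => ha.trans_le <|
    mul_nonneg (rpow_nonneg n.cast_nonneg _) (Real.iSup_nonneg fun x => abs_nonneg _),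
    fun a ha => ?_⟩
  obtain ⟨m, hm⟩ := exists_nat_one_div_lt (div_pos ha four_pos)
  exact (hω m).mono fun n hn => hn.trans_lt (by linarith)
end
end

section
/- Let Θ be the set of sequences θ = (θ_α)_{α∈ℕ} of nonnegative reals with θ_1 ≥ θ_2 ≥ … and Σ_{α=1}^∞ θ_α ≤ 1. If θ^n, θ ∈ Θ and θ^n → θ pointwise (θ^n_α → θ_α for every α), then Σ_{α=1}^∞ (θ^n_α)² → Σ_{α=1}^∞ (θ_α)² as n → ∞. In particular θ ↦ Σ_α θ_α² is continuous on Θ with the topology of pointwise convergence. -/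
set_option maxHeartbeats 1000000


open Filter Topology

/-- The extended parameter space `Θ`: nonincreasing sequences of nonnegative
reals with total sum at most one. -/
def MemTheta (θ : ℕ → ℝ) : Prop :=
  (∀ α, 0 ≤ θ α) ∧ Antitone θ ∧ Summable θ ∧ ∑' α, θ α ≤ 1

lemma memTheta_le_inv (θ : ℕ → ℝ) (hθ : MemTheta θ) (M : ℕ) :
    θ M ≤ 1 / (M + 1) := by
  obtain ⟨hpos, hanti, hsum, hle⟩ := hθ
  have h1 : (M + 1 : ℝ) * θ M ≤ 1 := by
    calc (M + 1 : ℝ) * θ M = ∑ _i ∈ Finset.range (M + 1), θ M := by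
          simp [Finset.sum_const, mul_comm]
      _ ≤ ∑ i ∈ Finset.range (M + 1), θ i :=
          Finset.sum_le_sum fun i hi => hanti (Nat.le_of_lt_succ (Finset.mem_range.mp hi))
      _ ≤ ∑' α, θ α := Summable.sum_le_tsum _ (fun i _ => hpos i) hsum
      _ ≤ 1 := hle
  have hM : (0 : ℝ) < M + 1 := by positivity
  rw [le_div_iff₀ hM, mul_comm]
  exact h1

lemma memTheta_sq_summable (θ : ℕ → ℝ) (hθ : MemTheta θ) :
    Summable (fun α => θ α ^ 2) := by
  obtain ⟨hpos, hanti, hsum, hle⟩ := hθ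
  apply Summable.of_nonneg_of_le (fun a => sq_nonneg _) _ hsum
  intro a
  have h1 : θ a ≤ 1 := by
    calc θ a ≤ θ 0 := hanti (Nat.zero_le a)
      _ ≤ ∑' α, θ α := Summable.le_tsum hsum 0 (fun i _ => hpos i)
      _ ≤ 1 := hle
  nlinarith [hpos a]

lemma memTheta_tail (θ : ℕ → ℝ) (hθ : MemTheta θ) (M : ℕ) :
    ∑' α, θ (α + M) ^ 2 ≤ 1 / (M + 1) := by
  obtain ⟨hpos, hanti, hsum, hle⟩ := hθ
  have hsq := memTheta_sq_summable θ ⟨hpos, hanti, hsum, hle⟩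
  have hsumM : Summable (fun α => θ (α + M)) := (summable_nat_add_iff M).mpr hsum
  have hsqM : Summable (fun α => θ (α + M) ^ 2) := by
    have := (summable_nat_add_iff (f := fun α => θ α ^ 2) M).mpr hsq
    simpa using this
  have hle' : ∀ a, θ (a + M) ^ 2 ≤ θ M * θ (a + M) := by
    intro a
    have := hanti (Nat.le_add_left M a)
    nlinarith [hpos (a + M)]
  have h1 : ∑' α, θ (α + M) ^ 2 ≤ ∑' α, θ M * θ (α + M) :=
    Summable.tsum_le_tsum hle' hsqM (hsumM.mul_left (θ M))
  have h2 : ∑' α, θ (α + M) ≤ 1 := by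
    have := Summable.sum_add_tsum_nat_add M hsum
    have hnn : 0 ≤ ∑ i ∈ Finset.range M, θ i := Finset.sum_nonneg fun i _ => hpos i
    linarith [hle]
  calc ∑' α, θ (α + M) ^ 2 ≤ θ M * ∑' α, θ (α + M) := by rw [tsum_mul_left] at h1; exact h1
    _ ≤ θ M * 1 := mul_le_mul_of_nonneg_left h2 (hpos M)
    _ = θ M := mul_one _
    _ ≤ 1 / (M + 1) := memTheta_le_inv θ ⟨hpos, hanti, hsum, hle⟩ M

/-- on `Θ`, pointwise convergence `θⁿ → θ` implies
`∑_α (θⁿ_α)² → ∑_α (θ_α)²`; i.e. `θ ↦ ∑_α θ_α²` is (sequentially) continuous on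
`Θ` in the topology of pointwise convergence. -/
theorem statement16 (u : ℕ → ℕ → ℝ) (hu : ∀ n, MemTheta (u n))
    (θ : ℕ → ℝ) (hθ : MemTheta θ)
    (hconv : ∀ α : ℕ, Tendsto (fun n => u n α) atTop (𝓝 (θ α))) :
    Tendsto (fun n => ∑' α, (u n α) ^ 2) atTop (𝓝 (∑' α, (θ α) ^ 2)) := by
  rw [Metric.tendsto_atTop]
  intro ε hε
  -- choose M with 1/(M+1) < ε/4
  obtain ⟨M, hM⟩ := exists_nat_gt (4 / ε)
  have hMpos : (0 : ℝ) < M + 1 := by positivity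
  have hM4 : 1 / (M + 1 : ℝ) < ε / 4 := by
    rw [div_lt_div_iff₀ hMpos (by norm_num : (0:ℝ) < 4)]
    have : 4 / ε < M + 1 := lt_of_lt_of_le hM (by linarith)
    rw [div_lt_iff₀ hε] at this
    linarith
  -- finite sums converge
  have hfin : Tendsto (fun n => ∑ α ∈ Finset.range M, (u n α) ^ 2) atTop
      (𝓝 (∑ α ∈ Finset.range M, (θ α) ^ 2)) := by
    apply tendsto_finset_sum
    intro α _
    exact (hconv α).pow 2
  rw [Metric.tendsto_atTop] at hfin
  obtain ⟨N, hN⟩ := hfin (ε / 2) (by linarith)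
  refine ⟨N, fun n hn => ?_⟩
  have hNn := hN n hn
  have hsqu := memTheta_sq_summable (u n) (hu n)
  have hsqθ := memTheta_sq_summable θ hθ
  have hu_split := Summable.sum_add_tsum_nat_add M hsqu
  have hθ_split := Summable.sum_add_tsum_nat_add M hsqθ
  have htailu : ∑' α, (u n (α + M)) ^ 2 ≤ 1 / (M + 1) := memTheta_tail (u n) (hu n) M
  have htailθ : ∑' α, (θ (α + M)) ^ 2 ≤ 1 / (M + 1) := memTheta_tail θ hθ M
  have htailu0 : 0 ≤ ∑' α, (u n (α + M)) ^ 2 :=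
    tsum_nonneg fun a => sq_nonneg _
  have htailθ0 : 0 ≤ ∑' α, (θ (α + M)) ^ 2 :=
    tsum_nonneg fun a => sq_nonneg _
  rw [Real.dist_eq] at hNn ⊢
  rw [← hu_split, ← hθ_split]
  have habs : |∑ α ∈ Finset.range M, (u n α) ^ 2 - ∑ α ∈ Finset.range M, (θ α) ^ 2| < ε / 2 :=
    hNn
  rw [abs_lt] at habs ⊢
  constructor <;> nlinarith
end
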